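/- Let n ≥ 4. The endomorphism α_p of A[Ã_n] is neither injective nor surjective: it is not injective because α_p(t_0) = α_p(v_0) while t_0 ≠ v_0, and not surjective because its image is contained in the proper standard parabolic subgroup A_Y generated by t_1, ..., t_n, which does not contain t_0. -/

import Mathlib

open FreeGroup in
/-- Defining relations of the Artin group of affine type `Ã n` (`n ≥ 2`):
generators `t i` indexed by `ZMod (n+1)`, braid relations between cyclically
adjacent generators and commuting relations otherwise. -/
def ArtinAffineARels (n : ℕ) : Set (FreeGroup (ZMod (n + 1))) :=
  {w | ∃ i j : ZMod (n + 1),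
    (j = i + 1 ∧ w = of i * of j * of i * (of j * of i * of j)⁻¹) ∨
    (i ≠ j ∧ j ≠ i + 1 ∧ i ≠ j + 1 ∧ w = of i * of j * (of j * of i)⁻¹)}

/-- The Artin group of affine type `Ã n`. -/
def ArtinAffineA (n : ℕ) : Type := PresentedGroup (ArtinAffineARels n)

instance (n : ℕ) : Group (ArtinAffineA n) :=
  inferInstanceAs (Group (PresentedGroup (ArtinAffineARels n)))

/-- The standard generator `t i` of `A[Ã n]`. -/
def tA (n : ℕ) (i : ZMod (n + 1)) : ArtinAffineA n := PresentedGroup.of i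

/-- `t₁ t₂ ⋯ t_{n-1}` in `A[Ã n]`. -/
def wpos (n : ℕ) : ArtinAffineA n :=
  ((List.range (n - 1)).map (fun k => tA n ((k + 1 : ℕ) : ZMod (n + 1)))).prod

/-- `t₁⁻¹ t₂⁻¹ ⋯ t_{n-1}⁻¹` in `A[Ã n]`. -/
def wneg (n : ℕ) : ArtinAffineA n :=
  ((List.range (n - 1)).map (fun k => (tA n ((k + 1 : ℕ) : ZMod (n + 1)))⁻¹)).prod

/-- `v₀ = t₁ ⋯ t_{n-1} tₙ t_{n-1}⁻¹ ⋯ t₁⁻¹` in `A[Ã n]`. -/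
def vZero (n : ℕ) : ArtinAffineA n :=
  wpos n * tA n ((n : ℕ) : ZMod (n + 1)) * (wpos n)⁻¹

/-- `v₁ = t₁⁻¹ ⋯ t_{n-1}⁻¹ tₙ t_{n-1} ⋯ t₁` in `A[Ã n]`. -/
def vOne (n : ℕ) : ArtinAffineA n :=
  wneg n * tA n ((n : ℕ) : ZMod (n + 1)) * (wneg n)⁻¹

/-- The Garside element `Δ_Y` of the standard parabolic subgroup of `A[Ã n]`
generated by `Y = {t₁, …, tₙ}` (which is isomorphic to `A[A n]`). -/
def deltaY (n : ℕ) : ArtinAffineA n :=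
  ((List.range n).reverse.map
    (fun k => ((List.range (k + 1)).map
      (fun i => tA n ((i + 1 : ℕ) : ZMod (n + 1)))).prod)).prod

/-- The standard parabolic subgroup `A_Y` of `A[Ã n]` generated by `t₁, …, tₙ`. -/
def parabolicY (n : ℕ) : Subgroup (ArtinAffineA n) :=
  Subgroup.closure {g | ∃ i : ℕ, 1 ≤ i ∧ i ≤ n ∧ g = tA n (i : ZMod (n + 1))}

/-!
Conjugation by `Δ_Y` maps `t_i` to `t_{n+1-i}` for `1 ≤ i ≤ n`, so `Δ_Y^2` is central in `A_Y`.
Hence `α_p` multiplies the conjugate `v₀ = w tₙ w⁻¹` (with `w = t₁ ⋯ t_{n-1}`) by `Δ_Y^{2p}`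
exactly as it does `t₀`, and every `α_p(t_i)` lies in `A_Y`. To see `t₀ ∉ A_Y`, let
`A[Ã_n]` act on `ℤ` through the affine symmetric group, `t_i` swapping `x` and `x + 1` for every
`x ≡ i (mod n + 1)`: the generators `t₁, …, tₙ` preserve the window `{1, …, n + 1}`, while `t₀`
moves `1` to `0`. As `v₀ ∈ A_Y`, this also gives `t₀ ≠ v₀`.
-/

section Garside

variable {G : Type*} [Group G]

structure IsBraidSequence (t : ℕ → G) (n : ℕ) : Prop where
  braid : ∀ i, 1 ≤ i → i < n → t i * t (i + 1) * t i = t (i + 1) * t i * t (i + 1)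
  commute : ∀ i j, 1 ≤ i → i + 2 ≤ j → j ≤ n → Commute (t i) (t j)

def prefixProd (t : ℕ → G) (k : ℕ) : G := ((List.range k).map fun i => t (i + 1)).prod

-- `P_k P_{k-1} ⋯ P_1` with `P_j = t 1 ⋯ t j`: the Garside element of `⟨t 1, …, t k⟩`.
def garsideProd (t : ℕ → G) (k : ℕ) : G :=
  ((List.range k).reverse.map fun j => prefixProd t (j + 1)).prod

variable {t : ℕ → G} {n : ℕ}

@[simp] lemma prefixProd_zero (t : ℕ → G) : prefixProd t 0 = 1 := rfl

lemma prefixProd_succ (t : ℕ → G) (k : ℕ) :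
    prefixProd t (k + 1) = prefixProd t k * t (k + 1) := by
  simp [prefixProd, List.range_succ]

lemma prefixProd_succ' (t : ℕ → G) (k : ℕ) :
    prefixProd t (k + 1) = t 1 * prefixProd (fun i => t (i + 1)) k := by
  simp [prefixProd, List.range_succ_eq_map, Function.comp_def]

@[simp] lemma garsideProd_zero (t : ℕ → G) : garsideProd t 0 = 1 := rfl

lemma garsideProd_succ (t : ℕ → G) (k : ℕ) :
    garsideProd t (k + 1) = prefixProd t (k + 1) * garsideProd t k := by
  simp [garsideProd, List.range_succ]

namespace IsBraidSequence

variable (ht : IsBraidSequence t n)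
include ht

lemma commute_prefixProd {j m : ℕ} (hm : m + 2 ≤ j) (hj : j ≤ n) :
    Commute (t j) (prefixProd t m) :=
  Commute.list_prod_right _ _ <| by
    simp only [List.mem_map, List.mem_range]
    rintro _ ⟨i, hi, rfl⟩
    exact (ht.commute _ _ (by omega) (by omega) hj).symm

lemma commute_garsideProd {j m : ℕ} (hm : m + 2 ≤ j) (hj : j ≤ n) :
    Commute (t j) (garsideProd t m) :=
  Commute.list_prod_right _ _ <| by
    simp only [List.mem_map, List.mem_reverse, List.mem_range]
    rintro _ ⟨i, hi, rfl⟩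
    exact ht.commute_prefixProd (by omega) hj

lemma prefixProd_mul_eq_mul_prefixProd {i k : ℕ} (hi : 1 ≤ i) (hik : i < k) (hk : k ≤ n) :
    prefixProd t k * t i = t (i + 1) * prefixProd t k := by
  induction k with
  | zero => omega
  | succ k ih =>
    obtain hik | rfl := Nat.lt_succ_iff_lt_or_eq.mp hik
    · rw [prefixProd_succ, mul_assoc, ← (ht.commute i (k + 1) hi (by omega) hk).eq, ← mul_assoc,
        ih hik (by omega), mul_assoc]
    · obtain ⟨l, rfl⟩ : ∃ l, i = l + 1 := ⟨i - 1, by omega⟩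
      rw [prefixProd_succ, prefixProd_succ]
      calc prefixProd t l * t (l + 1) * t (l + 2) * t (l + 1)
          = prefixProd t l * (t (l + 1) * t (l + 2) * t (l + 1)) := by group
        _ = prefixProd t l * t (l + 2) * (t (l + 1) * t (l + 2)) := by
          rw [ht.braid (l + 1) hi (by omega)]; group
        _ = t (l + 2) * (prefixProd t l * t (l + 1) * t (l + 2)) := by
          rw [← (ht.commute_prefixProd (by omega) hk).eq]; group

lemma prefixProd_mul_prefixProd {k m : ℕ} (hmk : m < k) (hk : k ≤ n) :
    prefixProd t k * prefixProd t m = prefixProd (fun i => t (i + 1)) m * prefixProd t k := by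
  induction m with
  | zero => simp
  | succ m ih =>
    rw [prefixProd_succ, prefixProd_succ, ← mul_assoc, ih (by omega), mul_assoc,
      ht.prefixProd_mul_eq_mul_prefixProd (by omega) hmk hk, mul_assoc]

lemma garsideProd_mul_last {k : ℕ} (hk₁ : 1 ≤ k) (hk : k ≤ n) :
    garsideProd t k * t k = t 1 * garsideProd t k := by
  match k, hk₁, hk with
  | 1, _, _ => simp [garsideProd_succ, prefixProd_succ]
  | m + 2, _, hk =>
    have hP := ht.prefixProd_mul_prefixProd (m := m + 1) (k := m + 2) (by omega) hk
    calc garsideProd t (m + 2) * t (m + 2)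
        = prefixProd t (m + 2) * prefixProd t (m + 1) * (garsideProd t m * t (m + 2)) := by
          simp only [garsideProd_succ, mul_assoc]
      _ = prefixProd t (m + 2) * prefixProd t (m + 2) * garsideProd t m := by
          rw [← (ht.commute_garsideProd (by omega) hk).eq, prefixProd_succ t (m + 1)]; group
      _ = t 1 * (prefixProd (fun i => t (i + 1)) (m + 1) * prefixProd t (m + 2)) *
            garsideProd t m := by
          rw [prefixProd_succ' t (m + 1)]; group
      _ = t 1 * garsideProd t (m + 2) := by
          rw [← hP, garsideProd_succ, garsideProd_succ]; group

lemma garsideProd_mul_eq_mul_garsideProd {k : ℕ} (i : ℕ) (hi : 1 ≤ i) (hik : i ≤ k)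
    (hk : k ≤ n) :
    garsideProd t k * t i = t (k + 1 - i) * garsideProd t k := by
  induction k generalizing i with
  | zero => omega
  | succ k ih =>
    obtain hik | rfl := Nat.lt_succ_iff_lt_or_eq.mp (Nat.lt_succ_of_le hik)
    · rw [garsideProd_succ, mul_assoc, ih i hi (by omega) (by omega), ← mul_assoc,
        ht.prefixProd_mul_eq_mul_prefixProd (by omega) (by omega) hk, mul_assoc,
        show k + 1 - i + 1 = k + 1 + 1 - i by omega]
    · rw [Nat.add_sub_cancel_left]
      exact ht.garsideProd_mul_last hi hk

lemma commute_garsideProd_sq {i : ℕ} (hi : 1 ≤ i) (hin : i ≤ n) :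
    Commute (garsideProd t n ^ 2) (t i) := by
  have h := ht.garsideProd_mul_eq_mul_garsideProd (n + 1 - i) (by omega) (by omega) le_rfl
  rw [show n + 1 - (n + 1 - i) = i by omega] at h
  rw [Commute, SemiconjBy, sq, mul_assoc, ht.garsideProd_mul_eq_mul_garsideProd i hi hin le_rfl,
    ← mul_assoc, h, mul_assoc]

end IsBraidSequence

end Garside

section TwistedEndomorphism

variable {G : Type*} [Group G] (f : G →* G) {z : G}

lemma map_list_prod_eq_mul_pow (l : List G) (hf : ∀ x ∈ l, f x = x * z)
    (hz : ∀ x ∈ l, Commute z x) : f l.prod = l.prod * z ^ l.length := by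
  induction l with
  | nil => simp
  | cons x l ih =>
    simp only [List.forall_mem_cons] at hf hz
    rw [List.prod_cons, map_mul, hf.1, ih hf.2 hz.2, List.length_cons, pow_succ',
      mul_assoc, ← mul_assoc z, (Commute.list_prod_right _ _ hz.2).eq]
    group

lemma map_conj_eq_mul {g s : G} {k : ℕ} (hg : f g = g * z ^ k) (hs : f s = s * z)
    (hzg : Commute z g) (hzs : Commute z s) : f (g * s * g⁻¹) = g * s * g⁻¹ * z := by
  have hzk : Commute (z ^ k) (s * z) := (hzs.mul_right (Commute.refl z)).pow_left k
  calc f (g * s * g⁻¹) = g * (z ^ k * (s * z)) * (z ^ k)⁻¹ * g⁻¹ := by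
        rw [map_mul, map_mul, map_inv, hg, hs]; group
    _ = g * s * (z * g⁻¹) := by rw [hzk.eq]; group
    _ = g * s * g⁻¹ * z := by rw [hzg.inv_right.eq]; group

end TwistedEndomorphism

lemma ZMod.intCast_eq_intCast_of_abs_sub_lt {m : ℕ} {x y : ℤ} (h : (x : ZMod m) = y)
    (hxy : |x - y| < m) : x = y := by
  rw [ZMod.intCast_eq_intCast_iff_dvd_sub] at h
  have := Int.eq_zero_of_abs_lt_dvd h (by rwa [abs_sub_comm])
  omega

lemma ZMod.natCast_ne_natCast_of_lt {m a b : ℕ} (hab : a < b) (hb : b < a + m) :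
    (a : ZMod m) ≠ b := by
  intro h
  have := ZMod.intCast_eq_intCast_of_abs_sub_lt (m := m) (x := a) (y := b) (by exact_mod_cast h)
    (by rw [abs_lt]; omega)
  omega

section AffineSymmetricGroup

open scoped Pointwise

variable {m : ℕ}

def affineSwap (m : ℕ) (i : ZMod m) (x : ℤ) : ℤ :=
  if (x : ZMod m) = i then x + 1 else if (x : ZMod m) = i + 1 then x - 1 else x

lemma affineSwap_mem_Icc {k : ℕ} (hk : 1 ≤ k) (hkm : k < m) {x : ℤ}
    (hx : x ∈ Set.Icc 1 (m : ℤ)) : affineSwap m k x ∈ Set.Icc 1 (m : ℤ) := by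
  rw [Set.mem_Icc] at hx ⊢
  unfold affineSwap
  split_ifs with h h'
  · have := ZMod.intCast_eq_intCast_of_abs_sub_lt (y := k) (by exact_mod_cast h)
      (by rw [abs_lt]; omega)
    omega
  · have := ZMod.intCast_eq_intCast_of_abs_sub_lt (y := k + 1) (by push_cast; exact h')
      (by rw [abs_lt]; omega)
    omega
  · exact hx

variable [Fact (1 < m)]

lemma affineSwap_involutive (i : ZMod m) : Function.Involutive (affineSwap m i) := by
  intro x
  by_cases h : (x : ZMod m) = i
  · simp [affineSwap, h]
  by_cases h' : (x : ZMod m) = i + 1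
  · simp [affineSwap, h']
  · simp [affineSwap, h, h']

lemma affineSwap_braid (hm : 2 < m) (i : ZMod m) (x : ℤ) :
    affineSwap m i (affineSwap m (i + 1) (affineSwap m i x)) =
      affineSwap m (i + 1) (affineSwap m i (affineSwap m (i + 1) x)) := by
  have h₂ : (2 : ZMod m) ≠ 0 := by
    rw [← Nat.cast_ofNat, Ne, ZMod.natCast_eq_zero_iff]
    exact Nat.not_dvd_of_pos_of_lt two_pos hm
  have h₂₁ : (2 : ZMod m) ≠ 1 := fun h => one_ne_zero (by linear_combination h)
  have e₁ : i + 1 + 1 = i + 2 := by ring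
  have e₂ : i + 2 - 1 = i + 1 := by ring
  by_cases h : (x : ZMod m) = i
  · simp [affineSwap, h, e₁, h₂, h₂₁]
  by_cases h' : (x : ZMod m) = i + 1
  · simp [affineSwap, h', e₁, h₂, h₂₁]
  by_cases h'' : (x : ZMod m) = i + 2
  · simp [affineSwap, h'', e₁, e₂, h₂, h₂₁]
  · simp [affineSwap, h, h', h'', e₁]

lemma affineSwap_comm {i j : ZMod m} (h₁ : i ≠ j) (h₂ : j ≠ i + 1) (h₃ : i ≠ j + 1) (x : ℤ) :
    affineSwap m i (affineSwap m j x) = affineSwap m j (affineSwap m i x) := by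
  by_cases h : (x : ZMod m) = i
  · simp [affineSwap, h, h₁, h₃, h₂.symm]
  by_cases h' : (x : ZMod m) = i + 1
  · simp [affineSwap, h', h₁, h₂.symm, h₃]
  by_cases h'' : (x : ZMod m) = j
  · simp [affineSwap, h'', h₁.symm, h₂, h₃.symm]
  by_cases h''' : (x : ZMod m) = j + 1
  · simp [affineSwap, h''', h₂, h₃.symm, h₁.symm]
  · simp [affineSwap, h, h', h'', h''']

def affineSwapPerm (i : ZMod m) : Equiv.Perm ℤ := (affineSwap_involutive i).toPerm

lemma affineSwapPerm_mem_stabilizer {k : ℕ} (hk : 1 ≤ k) (hkm : k < m) :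
    affineSwapPerm (k : ZMod m) ∈ MulAction.stabilizer (Equiv.Perm ℤ) (Set.Icc 1 (m : ℤ)) :=
  (MulAction.mem_stabilizer_set' (Set.finite_Icc _ _)).mpr fun _ hx =>
    affineSwap_mem_Icc hk hkm hx

lemma affineSwapPerm_zero_notMem_stabilizer :
    affineSwapPerm (0 : ZMod m) ∉ MulAction.stabilizer (Equiv.Perm ℤ) (Set.Icc 1 (m : ℤ)) := by
  intro h
  have h₁ := (MulAction.mem_stabilizer_set' (Set.finite_Icc _ _)).mp h
    (Set.left_mem_Icc.mpr (by exact_mod_cast (Fact.out : 1 < m).le))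
  simp [affineSwapPerm, affineSwap] at h₁

end AffineSymmetricGroup

namespace ArtinAffineA

lemma tA_braid (n : ℕ) (i : ZMod (n + 1)) :
    tA n i * tA n (i + 1) * tA n i = tA n (i + 1) * tA n i * tA n (i + 1) :=
  PresentedGroup.mk_eq_mk_of_mul_inv_mem ⟨i, i + 1, Or.inl ⟨rfl, rfl⟩⟩

lemma tA_commute (n : ℕ) {i j : ZMod (n + 1)} (h₁ : i ≠ j) (h₂ : j ≠ i + 1) (h₃ : i ≠ j + 1) :
    Commute (tA n i) (tA n j) :=
  PresentedGroup.mk_eq_mk_of_mul_inv_mem ⟨i, j, Or.inr ⟨h₁, h₂, h₃, rfl⟩⟩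

lemma isBraidSequence_tA (n : ℕ) : IsBraidSequence (fun i : ℕ => tA n i) n where
  braid i _ _ := by simpa only [Nat.cast_succ] using tA_braid n i
  commute i j hi hij hj := by
    refine tA_commute n (ZMod.natCast_ne_natCast_of_lt (by omega) (by omega)) ?_ ?_
    · rw [← Nat.cast_succ]
      exact (ZMod.natCast_ne_natCast_of_lt (by omega) (by omega)).symm
    · rw [← Nat.cast_succ]
      exact ZMod.natCast_ne_natCast_of_lt (by omega) (by omega)

lemma deltaY_eq_garsideProd (n : ℕ) : deltaY n = garsideProd (fun i : ℕ => tA n i) n := rfl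

lemma commute_deltaY_zpow (n : ℕ) (p : ℤ) {i : ℕ} (hi : 1 ≤ i) (hin : i ≤ n) :
    Commute (deltaY n ^ (2 * p)) (tA n i) := by
  rw [zpow_mul, zpow_ofNat, deltaY_eq_garsideProd]
  exact ((isBraidSequence_tA n).commute_garsideProd_sq hi hin).zpow_left p

lemma map_vZero {n : ℕ} (hn : 1 ≤ n) {p : ℤ} (α : ArtinAffineA n →* ArtinAffineA n)
    (hα₁ : ∀ i : ℕ, 1 ≤ i → i ≤ n →
      α (tA n (i : ZMod (n + 1))) = tA n (i : ZMod (n + 1)) * deltaY n ^ (2 * p)) :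
    α (vZero n) = vZero n * deltaY n ^ (2 * p) := by
  have hbound : ∀ k ∈ List.range (n - 1), 1 ≤ k + 1 ∧ k + 1 ≤ n := fun k hk => by
    rw [List.mem_range] at hk; omega
  have hcomm : ∀ x ∈ (List.range (n - 1)).map fun k => tA n (k + 1 : ℕ),
      Commute (deltaY n ^ (2 * p)) x := List.forall_mem_map.mpr fun k hk =>
    commute_deltaY_zpow n p (hbound k hk).1 (hbound k hk).2
  have hw := map_list_prod_eq_mul_pow α ((List.range (n - 1)).map fun k => tA n (k + 1 : ℕ))
    (List.forall_mem_map.mpr fun k hk => hα₁ (k + 1) (hbound k hk).1 (hbound k hk).2) hcomm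
  have hzw : Commute (deltaY n ^ (2 * p)) (wpos n) := Commute.list_prod_right _ _ hcomm
  exact map_conj_eq_mul α hw (hα₁ n hn le_rfl) hzw (commute_deltaY_zpow n p hn le_rfl)

lemma tA_mem_parabolicY {n i : ℕ} (hi : 1 ≤ i) (hin : i ≤ n) : tA n i ∈ parabolicY n :=
  Subgroup.subset_closure ⟨i, hi, hin, rfl⟩

lemma prefixProd_mem_parabolicY {n k : ℕ} (hk : k ≤ n) :
    prefixProd (fun i : ℕ => tA n i) k ∈ parabolicY n :=
  list_prod_mem <| List.forall_mem_map.mpr fun i hi =>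
    tA_mem_parabolicY (by omega) (by rw [List.mem_range] at hi; omega)

lemma deltaY_mem_parabolicY (n : ℕ) : deltaY n ∈ parabolicY n :=
  list_prod_mem <| List.forall_mem_map.mpr fun k hk =>
    prefixProd_mem_parabolicY (by rw [List.mem_reverse, List.mem_range] at hk; omega)

lemma vZero_mem_parabolicY {n : ℕ} (hn : 1 ≤ n) : vZero n ∈ parabolicY n :=
  have hw : wpos n ∈ parabolicY n := prefixProd_mem_parabolicY (by omega)
  mul_mem (mul_mem hw (tA_mem_parabolicY hn le_rfl)) (inv_mem hw)

lemma map_mem_parabolicY {n : ℕ} {p : ℤ} (α : ArtinAffineA n →* ArtinAffineA n)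
    (hα₁ : ∀ i : ℕ, 1 ≤ i → i ≤ n →
      α (tA n (i : ZMod (n + 1))) = tA n (i : ZMod (n + 1)) * deltaY n ^ (2 * p))
    (hα₀ : α (tA n 0) = vZero n * deltaY n ^ (2 * p)) (hn : 1 ≤ n) (a : ArtinAffineA n) :
    α a ∈ parabolicY n := by
  refine PresentedGroup.generated_by _ ((parabolicY n).comap α) (fun j => ?_) a
  have hΔ := zpow_mem (deltaY_mem_parabolicY n) (2 * p)
  obtain rfl | hj := eq_or_ne j 0
  · exact (hα₀ ▸ mul_mem (vZero_mem_parabolicY hn) hΔ :)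
  · have hval : 1 ≤ j.val ∧ j.val ≤ n :=
      ⟨ZMod.val_pos.mpr hj, Nat.lt_succ_iff.mp (ZMod.val_lt j)⟩
    rw [← ZMod.natCast_zmod_val j]
    exact (hα₁ j.val hval.1 hval.2 ▸ mul_mem (tA_mem_parabolicY hval.1 hval.2) hΔ :)

def toAffinePerm (n : ℕ) (hn : 2 ≤ n) : ArtinAffineA n →* Equiv.Perm ℤ :=
  haveI : Fact (1 < n + 1) := ⟨by omega⟩
  PresentedGroup.toGroup (f := affineSwapPerm) <| by
    rintro r ⟨i, j, ⟨rfl, rfl⟩ | ⟨h₁, h₂, h₃, rfl⟩⟩ <;>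
      simp only [map_mul, map_inv, FreeGroup.lift_apply_of, mul_inv_eq_one]
    · exact Equiv.ext (affineSwap_braid (by omega) i)
    · exact Equiv.ext (affineSwap_comm h₁ h₂ h₃)

lemma toAffinePerm_tA {n : ℕ} (hn : 2 ≤ n) [Fact (1 < n + 1)] (i : ZMod (n + 1)) :
    toAffinePerm n hn (tA n i) = affineSwapPerm i :=
  PresentedGroup.toGroup.of _

open scoped Pointwise in
lemma tA_zero_notMem_parabolicY {n : ℕ} (hn : 2 ≤ n) : tA n 0 ∉ parabolicY n := by
  have : Fact (1 < n + 1) := ⟨by omega⟩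
  have hle : parabolicY n ≤ (MulAction.stabilizer (Equiv.Perm ℤ)
      (Set.Icc 1 ((n + 1 : ℕ) : ℤ))).comap (toAffinePerm n hn) := by
    refine (Subgroup.closure_le _).mpr ?_
    rintro _ ⟨i, hi, hin, rfl⟩
    rw [SetLike.mem_coe, Subgroup.mem_comap, toAffinePerm_tA]
    exact affineSwapPerm_mem_stabilizer hi (by omega)
  intro h
  have h₀ := hle h
  rw [Subgroup.mem_comap, toAffinePerm_tA] at h₀
  exact affineSwapPerm_zero_notMem_stabilizer h₀

end ArtinAffineA

/-- The endomorphism `α_p` of `A[Ã n]` (`n ≥ 4`) is neither injective nor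
surjective: `α_p t₀ = α_p v₀` while `t₀ ≠ v₀`, and its image is contained in
the proper standard parabolic subgroup `A_Y`, which does not contain `t₀`. -/
theorem stmt17 (n : ℕ) (hn : 4 ≤ n) (p : ℤ)
    (α : ArtinAffineA n →* ArtinAffineA n)
    (hα₁ : ∀ i : ℕ, 1 ≤ i → i ≤ n →
      α (tA n (i : ZMod (n + 1))) = tA n (i : ZMod (n + 1)) * deltaY n ^ (2 * p))
    (hα₀ : α (tA n 0) = vZero n * deltaY n ^ (2 * p)) :
    α (tA n 0) = α (vZero n) ∧ tA n 0 ≠ vZero n ∧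
    ¬ Function.Injective α ∧
    (∀ a : ArtinAffineA n, α a ∈ parabolicY n) ∧
    tA n 0 ∉ parabolicY n ∧
    ¬ Function.Surjective α := by
  have h₀ : α (tA n 0) = α (vZero n) := hα₀.trans (ArtinAffineA.map_vZero (by omega) α hα₁).symm
  have hY : tA n 0 ∉ parabolicY n := ArtinAffineA.tA_zero_notMem_parabolicY (by omega)
  have hne : tA n 0 ≠ vZero n := fun h => hY (h ▸ ArtinAffineA.vZero_mem_parabolicY (by omega))
  have hα : ∀ a, α a ∈ parabolicY n := ArtinAffineA.map_mem_parabolicY α hα₁ hα₀ (by omega)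
  refine ⟨h₀, hne, fun hinj => hne (hinj h₀), hα, hY, fun hsurj => ?_⟩
  obtain ⟨a, ha⟩ := hsurj (tA n 0)
  exact hY (ha ▸ hα a)
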